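/- arXiv:2203.05600 — 5 statements merged into one kernel-verified Lean document; each statement's English description precedes it below -/
import Mathlib

section
/- Let Q = ℝ^n, let L : ℝ^n × ℝ^n → ℝ be a smooth Lagrangian L(q,v), and let Δ_Q(q) ⊆ ℝ^n be a subspace for each q. Consider the induced Dirac structure at a point z = (q,v,p): D(z) = { ((δq,δv,δp), (a,b,c)) : δq ∈ Δ_Q(q), and a(w_q) + b(w_v) + c(w_p) = ⟨δp, w_q⟩ − ⟨w_p, δq⟩ for all (w_q,w_v,w_p) with w_q ∈ Δ_Q(q) }, and let α_L(z) = (−∂L/∂q, p − ∂L/∂v, v) ∈ (ℝ^n)*×(ℝ^n)*×(ℝ^n)*. Then for a curve z(t) = (q(t),v(t),p(t)), the condition ż(t) ⊕ α_L(z(t)) ∈ D(z(t)) holds if and only if: q̇ ∈ Δ_Q(q), v = q̇, p = ∂L/∂v, and ṗ − ∂L/∂q ∈ Δ_Q°(q). -/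
open Matrix

/-- For a curve `z(t) = (q(t), v(t), p(t))` in the Pontryagin bundle of `ℝⁿ`,
the Dirac condition `ż(t) ⊕ α_L(z(t)) ∈ D(z(t))` for the Dirac structure induced
by the lifted constraint distribution and the presymplectic form is equivalent to
the implicit Lagrangian equations: `q̇ ∈ Δ_Q(q)`, `v = q̇`, `p = ∂L/∂v`, and
`ṗ − ∂L/∂q ∈ Δ_Q°(q)`. -/
theorem implicit_lagrangian_dirac_condition {n : ℕ}
    (L : (Fin n → ℝ) × (Fin n → ℝ) → ℝ) (hL : ContDiff ℝ (⊤ : ℕ∞) L)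
    (ΔQ : (Fin n → ℝ) → Submodule ℝ (Fin n → ℝ))
    (q v p q' v' p' : ℝ → (Fin n → ℝ))
    (hq : ∀ t, HasDerivAt q (q' t) t)
    (hv : ∀ t, HasDerivAt v (v' t) t)
    (hp : ∀ t, HasDerivAt p (p' t) t)
    (t : ℝ) :
    -- `ż(t) ⊕ α_L(z(t)) ∈ D(z(t))`
    (q' t ∈ ΔQ (q t) ∧
      ∀ wq wv wp : Fin n → ℝ, wq ∈ ΔQ (q t) →
        (-(fderiv ℝ L (q t, v t) (wq, 0)))
            + ((p t) ⬝ᵥ wv - fderiv ℝ L (q t, v t) (0, wv))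
            + (wp ⬝ᵥ (v t))
          = wp ⬝ᵥ (q' t) - (p' t) ⬝ᵥ wq)
    ↔
    (q' t ∈ ΔQ (q t) ∧ v t = q' t ∧
      (∀ w : Fin n → ℝ, (p t) ⬝ᵥ w = fderiv ℝ L (q t, v t) (0, w)) ∧
      (∀ w ∈ ΔQ (q t), (p' t) ⬝ᵥ w - fderiv ℝ L (q t, v t) (w, 0) = 0)) := by

  have hz : fderiv ℝ L (q t, v t) ((0 : Fin n → ℝ), (0 : Fin n → ℝ)) = 0 := by
    have : ((0 : Fin n → ℝ), (0 : Fin n → ℝ)) = (0 : (Fin n → ℝ) × (Fin n → ℝ)) := rfl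
    rw [this, map_zero]
  constructor
  · rintro ⟨h1, h2⟩
    refine ⟨h1, ?_, ?_, ?_⟩
    · funext i
      have := h2 0 0 (Pi.single i 1) (ΔQ (q t)).zero_mem
      simp [hz, single_dotProduct] at this
      linarith
    · intro w
      have := h2 0 w 0 (ΔQ (q t)).zero_mem
      simp [hz] at this
      linarith
    · intro w hw
      have := h2 w 0 0 hw
      simp [hz] at this
      linarith
  · rintro ⟨h1, h2, h3, h4⟩
    refine ⟨h1, fun wq wv wp hwq => ?_⟩
    have := h4 wq hwq
    rw [← h3 wv, show wp ⬝ᵥ v t = wp ⬝ᵥ q' t from by rw [h2]]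
    linarith
end

section
/- Let Q = ℝ^n, H : ℝ^n × (ℝ^n)* → ℝ a smooth Hamiltonian, and Δ_Q(q) ⊆ ℝ^n a subspace for each q. With the same induced Dirac structure D as in the Lagrangian case and α = dH̃ where H̃(q,v,p) = H(q,p), a curve z(t) = (q(t),v(t),p(t)) satisfies ż(t) ⊕ dH̃(z(t)) ∈ D(z(t)) if and only if: ṗ + ∂H/∂q ∈ Δ_Q°(q), q̇ = ∂H/∂p, and q̇ ∈ Δ_Q(q). -/
open Matrix

/-- For a curve `z(t) = (q(t), v(t), p(t))` in the Pontryagin bundle of `ℝⁿ`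
(with `(ℝⁿ)*` identified with `ℝⁿ` via the dot product), the Dirac condition
`ż(t) ⊕ dH̃(z(t)) ∈ D(z(t))` is equivalent to the implicit Hamiltonian
equations: `ṗ + ∂H/∂q ∈ Δ_Q°(q)`, `q̇ = ∂H/∂p`, and `q̇ ∈ Δ_Q(q)`. -/
theorem implicit_hamiltonian_dirac_condition {n : ℕ}
    (H : (Fin n → ℝ) × (Fin n → ℝ) → ℝ) (hH : ContDiff ℝ (⊤ : ℕ∞) H)
    (ΔQ : (Fin n → ℝ) → Submodule ℝ (Fin n → ℝ))
    (q v p q' v' p' : ℝ → (Fin n → ℝ))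
    (hq : ∀ t, HasDerivAt q (q' t) t)
    (hv : ∀ t, HasDerivAt v (v' t) t)
    (hp : ∀ t, HasDerivAt p (p' t) t)
    (t : ℝ) :
    -- `ż(t) ⊕ dH̃(z(t)) ∈ D(z(t))`
    (q' t ∈ ΔQ (q t) ∧
      ∀ wq wv wp : Fin n → ℝ, wq ∈ ΔQ (q t) →
        fderiv ℝ H (q t, p t) (wq, wp)
          = wp ⬝ᵥ (q' t) - (p' t) ⬝ᵥ wq)
    ↔
    ((∀ w ∈ ΔQ (q t), (p' t) ⬝ᵥ w + fderiv ℝ H (q t, p t) (w, 0) = 0) ∧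
      (∀ w : Fin n → ℝ, (q' t) ⬝ᵥ w = fderiv ℝ H (q t, p t) (0, w)) ∧
      q' t ∈ ΔQ (q t)) := by
  constructor
  · rintro ⟨hmem, hD⟩
    refine ⟨fun w hw => ?_, fun w => ?_, hmem⟩
    · have := hD w 0 0 hw
      simp [zero_dotProduct] at this
      linarith
    · have := hD 0 0 w (Submodule.zero_mem _)
      simp [dotProduct_zero] at this
      rw [this, dotProduct_comm]
  · rintro ⟨h1, h2, hmem⟩
    refine ⟨hmem, fun wq wv wp hwq => ?_⟩
    have hsplit : ((wq, wp) : (Fin n → ℝ) × (Fin n → ℝ)) = (wq, 0) + (0, wp) := by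
      simp
    rw [hsplit, map_add]
    have e1 := h1 wq hwq
    have e2 := h2 wp
    rw [dotProduct_comm] at e2
    linarith
end

section
/- Let Q = ℝ^n, L_d : ℝ^n × ℝ^n → ℝ smooth, and Δ_Q(q) ⊆ ℝ^n a subspace for each q. Fix a step of a discrete curve with x_k = (q_k, p_k, q_k^+) and x_{k+1} = (q_{k+1}, p_{k+1}, q_{k+1}^+). Then the Dirac condition ((0, p_k, 0), ψ_L(x.,k)) ∈ D_Δ(x_k), with ψ_L(x.,k) = (−D_1 L_d(q_k, q_k^+), 0, p_{k+1} − D_2 L_d(q_k, q_k^+)), holds if and only if p_{k+1} = D_2 L_d(q_k, q_k^+) and p_k + D_1 L_d(q_k, q_k^+) ∈ Δ_Q°(q_k). -/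
open Matrix

/-- For a step `x_k = (q_k, p_k, q_k⁺)`, `p_{k+1}` of a discrete curve in the
discrete Pontryagin bundle of `ℝⁿ`, the discrete Dirac condition
`((0, p_k, 0), ψ_L(x., k)) ∈ D_Δ(x_k)` is equivalent to
`p_{k+1} = D₂L_d(q_k, q_k⁺)` and `p_k + D₁L_d(q_k, q_k⁺) ∈ Δ_Q°(q_k)`. -/
theorem discrete_lagrangian_dirac_condition {n : ℕ}
    (Ld : (Fin n → ℝ) × (Fin n → ℝ) → ℝ) (hLd : ContDiff ℝ (⊤ : ℕ∞) Ld)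
    (ΔQ : (Fin n → ℝ) → Submodule ℝ (Fin n → ℝ))
    (qk pk qkp pk1 : Fin n → ℝ) :
    -- `((0, p_k, 0), ψ_L(x., k)) ∈ D_Δ(x_k)`
    ((0 : Fin n → ℝ) ∈ ΔQ qk ∧
      ∀ δq δp δqp : Fin n → ℝ, δq ∈ ΔQ qk →
        (-(fderiv ℝ Ld (qk, qkp) (δq, 0)))
            + (pk1 ⬝ᵥ δqp - fderiv ℝ Ld (qk, qkp) (0, δqp))
          = pk ⬝ᵥ δq)
    ↔
    ((∀ w : Fin n → ℝ, pk1 ⬝ᵥ w = fderiv ℝ Ld (qk, qkp) (0, w)) ∧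
      (∀ w ∈ ΔQ qk, pk ⬝ᵥ w + fderiv ℝ Ld (qk, qkp) (w, 0) = 0)) := by
  have hz : fderiv ℝ Ld (qk, qkp) ((0 : Fin n → ℝ), (0 : Fin n → ℝ)) = 0 := by
    have : ((0 : Fin n → ℝ), (0 : Fin n → ℝ)) = (0 : (Fin n → ℝ) × (Fin n → ℝ)) := rfl
    rw [this, map_zero]
  constructor
  · rintro ⟨h0, h⟩
    constructor
    · intro w
      have := h 0 0 w h0
      simp [hz, dotProduct_zero, zero_dotProduct] at this
      linarith
    · intro w hw
      have := h w 0 0 hw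
      simp [hz, dotProduct_zero] at this
      linarith
  · rintro ⟨h1, h2⟩
    refine ⟨(ΔQ qk).zero_mem, ?_⟩
    intro δq δp δqp hδq
    have a := h1 δqp
    have b := h2 δq hδq
    linarith
end

section
/- Let Q = ℝ^n and H_d : ℝ^n × (ℝ^n)* → ℝ smooth, and let Δ_Q(q) ⊆ ℝ^n be a subspace for each q. The Dirac condition ((0, p_k, 0), ψ_H(x.,k)) ∈ D_Δ(x_k), with ψ_H(x.,k) = (∂H_d/∂q(q_k, p_{k+1}), ∂H_d/∂p(q_k, p_{k+1}) − q_{k+1}, 0), holds if and only if p_k − ∂H_d/∂q(q_k, p_{k+1}) ∈ Δ_Q°(q_k) and q_{k+1} = ∂H_d/∂p(q_k, p_{k+1}). -/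
open Matrix

/-- For a step `x_k = (q_k, p_k, q_k⁺)` with data `(q_{k+1}, p_{k+1})`, the
discrete Dirac condition `((0, p_k, 0), ψ_H(x., k)) ∈ D_Δ(x_k)` for a discrete
Hamiltonian `H_d` is equivalent to `p_k − ∂H_d/∂q(q_k, p_{k+1}) ∈ Δ_Q°(q_k)` and
`q_{k+1} = ∂H_d/∂p(q_k, p_{k+1})` (with `(ℝⁿ)*` identified with `ℝⁿ`). -/
theorem discrete_hamiltonian_dirac_condition {n : ℕ}
    (Hd : (Fin n → ℝ) × (Fin n → ℝ) → ℝ) (hHd : ContDiff ℝ (⊤ : ℕ∞) Hd)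
    (ΔQ : (Fin n → ℝ) → Submodule ℝ (Fin n → ℝ))
    (qk pk qk1 pk1 : Fin n → ℝ) :
    -- `((0, p_k, 0), ψ_H(x., k)) ∈ D_Δ(x_k)`
    ((0 : Fin n → ℝ) ∈ ΔQ qk ∧
      ∀ δq δp δqp : Fin n → ℝ, δq ∈ ΔQ qk →
        fderiv ℝ Hd (qk, pk1) (δq, 0)
            + (fderiv ℝ Hd (qk, pk1) (0, δp) - qk1 ⬝ᵥ δp)
          = pk ⬝ᵥ δq)
    ↔
    ((∀ w ∈ ΔQ qk, pk ⬝ᵥ w - fderiv ℝ Hd (qk, pk1) (w, 0) = 0) ∧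
      (∀ w : Fin n → ℝ, qk1 ⬝ᵥ w = fderiv ℝ Hd (qk, pk1) (0, w))) := by
  constructor
  · rintro ⟨h0, h⟩
    constructor
    · intro w hw
      have := h w 0 0 hw
      simp at this
      have hzz : (fderiv ℝ Hd (qk, pk1)) (0, 0) = 0 := map_zero (fderiv ℝ Hd (qk, pk1))
      linarith
    · intro w
      have := h 0 w 0 h0
      have hz : ((qk, pk1) : (Fin n → ℝ) × (Fin n → ℝ)) = (qk, pk1) := rfl
      simp at this
      have hzz : (fderiv ℝ Hd (qk, pk1)) (0, 0) = 0 := map_zero (fderiv ℝ Hd (qk, pk1))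
      linarith
  · rintro ⟨h1, h2⟩
    refine ⟨(ΔQ qk).zero_mem, ?_⟩
    intro δq δp δqp hδq
    have e1 := h1 δq hδq
    have e2 := h2 δp
    linarith
end

section
/- Let Q = ℝ^n, L_d : ℝ^n × ℝ^n → ℝ smooth, Δ_Q(q) ⊆ ℝ^n a subspace for each q, and 𝒟 ⊆ ℝ^n × ℝ^n. A sequence (q_k, p_k, q_k^+)_{k=0}^N of points of the discrete Pontryagin bundle is a trajectory of the discrete Dirac system (i.e., q_k^+ = q_{k+1}, (q_k,q_{k+1}) ∈ 𝒟, and the Dirac condition holds at each step 0 ≤ k ≤ N−1) if and only if the sequence (q_k) satisfies the nonholonomic discrete mechanical equations D_1 L_d(q_k, q_{k+1}) + D_2 L_d(q_{k−1}, q_k) ∈ Δ_Q°(q_k) for 1 ≤ k ≤ N−1 and (q_k, q_{k+1}) ∈ 𝒟 for 0 ≤ k ≤ N−1, together with p_k = D_2 L_d(q_{k−1}, q_k) for 1 ≤ k ≤ N and p_0 + D_1 L_d(q_0, q_1) ∈ Δ_Q°(q_0). -/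
open Matrix

/-- An admissible discrete curve `(q_k, p_k, q_k⁺ = q_{k+1})` in the discrete
Pontryagin bundle of `ℝⁿ` is a trajectory of the discrete Dirac system
(kinematic constraint `𝒟` and Dirac condition at each step) iff `(q_k)` solves
the nonholonomic discrete mechanical equations
`D₁L_d(q_k, q_{k+1}) + D₂L_d(q_{k−1}, q_k) ∈ Δ_Q°(q_k)` with `(q_k, q_{k+1}) ∈ 𝒟`,
together with `p_k = D₂L_d(q_{k−1}, q_k)` for `1 ≤ k ≤ N` and
`p_0 + D₁L_d(q_0, q_1) ∈ Δ_Q°(q_0)`. -/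
theorem discrete_dirac_system_vs_nonholonomic {n N : ℕ} (hN : 1 ≤ N)
    (Ld : (Fin n → ℝ) × (Fin n → ℝ) → ℝ) (hLd : ContDiff ℝ (⊤ : ℕ∞) Ld)
    (ΔQ : (Fin n → ℝ) → Submodule ℝ (Fin n → ℝ))
    (𝒟 : Set ((Fin n → ℝ) × (Fin n → ℝ)))
    (q p : ℕ → (Fin n → ℝ)) :
    -- trajectory of the discrete Dirac system
    ((∀ k < N, (q k, q (k + 1)) ∈ 𝒟) ∧
      (∀ k < N,
        (0 : Fin n → ℝ) ∈ ΔQ (q k) ∧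
        ∀ δq δp δqp : Fin n → ℝ, δq ∈ ΔQ (q k) →
          (-(fderiv ℝ Ld (q k, q (k + 1)) (δq, 0)))
              + (p (k + 1) ⬝ᵥ δqp - fderiv ℝ Ld (q k, q (k + 1)) (0, δqp))
            = p k ⬝ᵥ δq))
    ↔
    -- nonholonomic discrete mechanical equations plus momentum matching
    ((∀ k, 1 ≤ k → k < N →
        ∀ w ∈ ΔQ (q k),
          fderiv ℝ Ld (q k, q (k + 1)) (w, 0)
              + fderiv ℝ Ld (q (k - 1), q k) (0, w) = 0) ∧
      (∀ k < N, (q k, q (k + 1)) ∈ 𝒟) ∧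
      (∀ k, 1 ≤ k → k ≤ N →
        ∀ w : Fin n → ℝ, p k ⬝ᵥ w = fderiv ℝ Ld (q (k - 1), q k) (0, w)) ∧
      (∀ w ∈ ΔQ (q 0), p 0 ⬝ᵥ w + fderiv ℝ Ld (q 0, q 1) (w, 0) = 0)) := by
  constructor
  · rintro ⟨hD, hDir⟩
    have hp : ∀ k < N, ∀ w, p (k + 1) ⬝ᵥ w = fderiv ℝ Ld (q k, q (k + 1)) (0, w) := by
      intro k hk w
      have h := (hDir k hk).2 0 0 w (zero_mem _)
      have h0 : ((0 : Fin n → ℝ), (0 : Fin n → ℝ)) = (0 : (Fin n → ℝ) × (Fin n → ℝ)) := rfl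
      rw [h0, map_zero] at h
      simp only [dotProduct_zero] at h
      linarith
    have hq : ∀ k < N, ∀ w ∈ ΔQ (q k),
        p k ⬝ᵥ w = -(fderiv ℝ Ld (q k, q (k + 1)) (w, 0)) := by
      intro k hk w hw
      have h := (hDir k hk).2 w 0 0 hw
      have h0 : ((0 : Fin n → ℝ), (0 : Fin n → ℝ)) = (0 : (Fin n → ℝ) × (Fin n → ℝ)) := rfl
      rw [h0, map_zero] at h
      simpa using h.symm
    refine ⟨?_, hD, ?_, ?_⟩
    · intro k hk1 hkN w hw
      have h1 := hq k hkN w hw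
      have h2 := hp (k - 1) (by omega) w
      rw [Nat.sub_add_cancel hk1] at h2
      linarith
    · intro k hk1 hkN w
      have h2 := hp (k - 1) (by omega) w
      rw [Nat.sub_add_cancel hk1] at h2
      exact h2
    · intro w hw
      have h1 := hq 0 hN w hw
      linarith
  · rintro ⟨hEq, hD, hMom, h0⟩
    refine ⟨hD, ?_⟩
    intro k hk
    refine ⟨zero_mem _, ?_⟩
    intro δq δp δqp hδq
    have hp1 : p (k + 1) ⬝ᵥ δqp = fderiv ℝ Ld (q k, q (k + 1)) (0, δqp) := by
      have h := hMom (k + 1) (by omega) (by omega) δqp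
      simpa using h
    rcases Nat.eq_zero_or_pos k with rfl | hk1
    · have h1 := h0 δq hδq
      linarith
    · have h1 := hEq k hk1 hk δq hδq
      have h2 := hMom k hk1 (le_of_lt hk) δq
      linarith
end
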